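/- In the Dinkelbach iteration q_{n+1} = A(π_n)/B(π_n), where π_n minimizes A(π) - q_n·B(π) over a finite set S with B(π) > 0 and A(π) ≥ 0, the sequence (q_n) is non-increasing and converges to q* = min_π A(π)/B(π) in finitely many steps. -/
import Mathlib


open Finset

/-- The Dinkelbach iteration `q_{n+1} = A(π_n)/B(π_n)`, where `π_n` minimizes
`A π - q_n * B π` over a finite nonempty set `S` with `A ≥ 0`, `B > 0`, started from
`q_0 ≥ q* = min_π A π / B π`, is non-increasing and reaches `q*` in finitely many steps
(and stays there). -/
theorem dinkelbach_iteration_converges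
    {P : Type*} (S : Finset P) (hS : S.Nonempty)
    (A B : P → ℝ) (hA : ∀ π ∈ S, 0 ≤ A π) (hB : ∀ π ∈ S, 0 < B π)
    (q : ℕ → ℝ) (π : ℕ → P) (hπS : ∀ n, π n ∈ S)
    (hargmin : ∀ n, ∀ σ ∈ S, A (π n) - q n * B (π n) ≤ A σ - q n * B σ)
    (hupd : ∀ n, q (n + 1) = A (π n) / B (π n))
    (hinit : (S.inf' hS fun σ => A σ / B σ) ≤ q 0) :
    Antitone q ∧ ∃ N, ∀ n ≥ N, q n = S.inf' hS fun σ => A σ / B σ := by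
  set qs : ℝ := S.inf' hS fun σ => A σ / B σ with hqs
  have hge1 : ∀ n, qs ≤ q (n + 1) := by
    intro n
    rw [hupd n]
    exact inf'_le _ (hπS n)
  have hge : ∀ n, qs ≤ q n := by
    intro n
    cases n with
    | zero => exact hinit
    | succ m => exact hge1 m
  obtain ⟨σs, hσsS, hσs⟩ := exists_mem_eq_inf' hS fun σ => A σ / B σ
  have hσsB := hB σs hσsS
  have hσsA : A σs = qs * B σs := by
    rw [hqs, hσs, div_mul_cancel₀ _ hσsB.ne']
  -- non-increasing
  have hdec : ∀ n, q (n + 1) ≤ q n := by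
    intro n
    have h1 : A (π n) - q n * B (π n) ≤ A σs - q n * B σs := hargmin n σs hσsS
    have h2 : qs * B σs ≤ q n * B σs := mul_le_mul_of_nonneg_right (hge n) hσsB.le
    have h3 : A (π n) ≤ q n * B (π n) := by linarith
    rw [hupd n, div_le_iff₀ (hB _ (hπS n))]
    exact h3
  have hanti : Antitone q := antitone_nat_of_succ_le hdec
  -- if a step stalls, we are at q*
  have hstall : ∀ n, q (n + 1) = q n → q n = qs := by
    intro n h
    refine le_antisymm ?_ (hge n)
    have hAn : A (π n) = q n * B (π n) := by
      have := hupd n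
      rw [h] at this
      field_simp [(hB _ (hπS n)).ne'] at this
      linarith
    refine Finset.le_inf' hS _ fun σ hσ => ?_
    have h1 : A (π n) - q n * B (π n) ≤ A σ - q n * B σ := hargmin n σ hσ
    rw [le_div_iff₀ (hB σ hσ)]
    linarith
  -- once at q*, stays at q*
  have hstay : ∀ n, q n = qs → q (n + 1) = qs := by
    intro n h
    refine le_antisymm ?_ (hge1 n)
    calc q (n + 1) ≤ q n := hdec n
      _ = qs := h
  refine ⟨hanti, ?_⟩
  -- pigeonhole: q (·+1) takes values in a finite set, so some step stalls
  have hfin : (Set.range fun n => q (n + 1)).Finite := by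
    apply (S.image fun σ => A σ / B σ).finite_toSet.subset
    rintro x ⟨n, rfl⟩
    simp only [hupd n]
    exact Finset.mem_coe.2 (Finset.mem_image_of_mem _ (hπS n))
  by_contra hcon
  push_neg at hcon
  have hstrict : StrictAnti fun n => q (n + 1) := by
    refine strictAnti_nat_of_succ_lt fun n => ?_
    rcases lt_or_eq_of_le (hdec (n + 1)) with h | h
    · exact h
    · exfalso
      obtain ⟨m, hm, hne⟩ := hcon (n + 1)
      have : ∀ k ≥ n + 1, q k = qs := by
        intro k hk
        induction k, hk using Nat.le_induction with
        | base => exact hstall (n + 1) h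
        | succ k hk ih => exact hstay k ih
      exact hne (this m hm)
  exact (Set.infinite_range_of_injective hstrict.injective) hfin
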